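/- For every natural number k ≥ 1, the Stern polynomials satisfy 2·∑_{i=1}^{2^k} (-1)^i·B_i(t) = (t-2)·((t+2)^{k-1} + t^{k-1}) + 2·t^{k-1} as an identity in ℤ[t]. -/

import Mathlib

open Polynomial

/-!
Split a row sum by the parity of the index and apply the recursion: with `S n = ∑_{i ≤ n} B_i`,
`∑_{i ≤ 2n} B_i = (t + 2) S n - B_n` and `∑_{i ≤ 2n} (-1)^i B_i = (t - 2) S n + B_n`.
Since `B_{2^k} = t^k`, the first identity gives `2 S (2^k) = (t + 2)^k + t^k` by induction on `k`,
and the second one, at `n = 2^(k-1)`, gives the theorem.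
-/

/-- The Stern polynomials: `B 0 = 0`, `B 1 = 1`, `B (2n) = t * B n`,
`B (2n+1) = B n + B (n+1)`. -/
noncomputable def stern : ℕ → Polynomial ℤ
  | 0 => 0
  | 1 => 1
  | n + 2 =>
    if _h : n % 2 = 0 then
      X * stern (n / 2 + 1)
    else
      stern (n / 2 + 1) + stern (n / 2 + 2)
  decreasing_by all_goals omega

theorem stern_zero : stern 0 = 0 := by rw [stern]

theorem stern_one : stern 1 = 1 := by rw [stern]

theorem stern_two_mul (n : ℕ) : stern (2 * n) = X * stern n := by
  rcases n with _ | m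
  · simp [stern_zero]
  · rw [show 2 * (m + 1) = 2 * m + 2 by ring, stern, dif_pos (by omega)]
    congr 2
    omega

theorem stern_two_mul_add_one (n : ℕ) : stern (2 * n + 1) = stern n + stern (n + 1) := by
  rcases n with _ | m
  · simp [stern_zero, stern_one]
  · rw [show 2 * (m + 1) + 1 = (2 * m + 1) + 2 by ring, stern, dif_neg (by omega)]
    congr 2 <;> omega

theorem stern_two_pow (k : ℕ) : stern (2 ^ k) = X ^ k := by
  induction k with
  | zero => exact stern_one
  | succ k ih => rw [pow_succ', stern_two_mul, ih, pow_succ']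

theorem sum_range_two_mul_add_one {M : Type*} [AddCommMonoid M] (f : ℕ → M) (n : ℕ) :
    ∑ i ∈ Finset.range (2 * n + 1), f i =
      ∑ j ∈ Finset.range (n + 1), f (2 * j) + ∑ j ∈ Finset.range n, f (2 * j + 1) := by
  induction n with
  | zero => simp
  | succ n ih =>
    rw [show 2 * (n + 1) + 1 = 2 * n + 1 + 1 + 1 by ring, Finset.sum_range_succ,
      Finset.sum_range_succ, ih, Finset.sum_range_succ (fun j ↦ f (2 * j)) (n + 1),
      Finset.sum_range_succ (fun j ↦ f (2 * j + 1)) n, show 2 * n + 1 + 1 = 2 * (n + 1) by ring]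
    abel

theorem sum_range_stern_even (n : ℕ) :
    ∑ j ∈ Finset.range (n + 1), stern (2 * j) = X * ∑ j ∈ Finset.range (n + 1), stern j := by
  simp only [stern_two_mul, Finset.mul_sum]

theorem sum_range_stern_odd (n : ℕ) :
    ∑ j ∈ Finset.range n, stern (2 * j + 1) =
      2 * ∑ j ∈ Finset.range (n + 1), stern j - stern n := by
  have h₀ := Finset.sum_range_succ stern n
  have h₁ := Finset.sum_range_succ' stern n
  simp only [stern_two_mul_add_one, Finset.sum_add_distrib]
  rw [stern_zero] at h₁
  linear_combination -h₀ - h₁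

theorem sum_range_two_mul_add_one_stern (n : ℕ) :
    ∑ i ∈ Finset.range (2 * n + 1), stern i =
      (X + 2) * ∑ j ∈ Finset.range (n + 1), stern j - stern n := by
  rw [sum_range_two_mul_add_one, sum_range_stern_even, sum_range_stern_odd]
  ring

theorem alternating_sum_range_two_mul_add_one_stern (n : ℕ) :
    ∑ i ∈ Finset.range (2 * n + 1), (-1) ^ i * stern i =
      (X - 2) * ∑ j ∈ Finset.range (n + 1), stern j + stern n := by
  have h_even (j : ℕ) : (-1 : ℤ[X]) ^ (2 * j) = 1 := (even_two_mul j).neg_one_pow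
  have h_odd (j : ℕ) : (-1 : ℤ[X]) ^ (2 * j + 1) = -1 := (odd_two_mul_add_one j).neg_one_pow
  rw [sum_range_two_mul_add_one]
  simp only [h_even, h_odd, one_mul, neg_one_mul, Finset.sum_neg_distrib]
  rw [sum_range_stern_even, sum_range_stern_odd]
  ring

theorem two_mul_sum_range_two_pow_add_one_stern (k : ℕ) :
    2 * ∑ i ∈ Finset.range (2 ^ k + 1), stern i = (X + 2) ^ k + X ^ k := by
  induction k with
  | zero => norm_num [Finset.sum_range_succ, stern_zero, stern_one]
  | succ k ih =>
    rw [pow_succ', sum_range_two_mul_add_one_stern, stern_two_pow]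
    linear_combination (X + 2) * ih

theorem stern_alt_sum_rows (k : ℕ) (hk : 1 ≤ k) :
    2 * ∑ i ∈ Finset.Icc 1 (2 ^ k), (-1) ^ i * stern i =
      (X - 2) * ((X + 2) ^ (k - 1) + X ^ (k - 1)) + 2 * X ^ (k - 1) := by
  obtain ⟨m, rfl⟩ : ∃ m, k = m + 1 := ⟨k - 1, by omega⟩
  have hIcc : ∑ i ∈ Finset.Icc 1 (2 ^ (m + 1)), (-1) ^ i * stern i =
      ∑ i ∈ Finset.range (2 ^ (m + 1) + 1), (-1) ^ i * stern i := by
    rw [Finset.sum_range_eq_add_Ico _ (by positivity : 0 < 2 ^ (m + 1) + 1),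
      Finset.Ico_add_one_right_eq_Icc, stern_zero, mul_zero, zero_add]
  rw [Nat.add_sub_cancel, hIcc, pow_succ', alternating_sum_range_two_mul_add_one_stern,
    stern_two_pow]
  linear_combination (X - 2) * two_mul_sum_range_two_pow_add_one_stern m
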